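/- arXiv:1302.5161 — 4 statements merged into one kernel-verified Lean document; each statement's English description precedes it below -/
import Mathlib

section
/- Let G be a directed graph on a finite set of operations containing edges for program order, write-to order, and closed under Rule C (for every triple w, r, w' on the same variable with w = D(r), w' ≠ w, and a path from w' to r, the edge w' → w is in G). If G is acyclic, then there exists a legal schedule of the operations that respects program order and write-to order (i.e., the trace satisfies PRAM consistency for the distinguished process). -/
/-- Abstract data of a read/write trace (restricted to the operations visible to the
distinguished process `p₀ = 0`, i.e. all writes plus `p₀`'s reads): operation type,
variable, issuing process, program order, and the dictating-write map `D` (well defined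
since writes assign unique values per variable). -/
structure PramTrace (ι : Type) where
  isRead : ι → Bool
  var : ι → ℕ
  proc : ι → ℕ
  po : ι → ι → Prop
  D : ι → ι
  po_trans : Transitive po
  po_irrefl : Irreflexive po
  po_proc : ∀ a b, po a b → proc a = proc b
  po_total : ∀ a b, proc a = proc b → a ≠ b → po a b ∨ po b a
  reads_p0 : ∀ r, isRead r = true → proc r = 0
  D_write : ∀ r, isRead r = true → isRead (D r) = false
  D_var : ∀ r, isRead r = true → var (D r) = var r

variable {ι : Type} [Fintype ι]

/-- `σ` is (the numbering of) a legal schedule of the operations respecting program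
order and write-to order: it is injective, respects `≺_PO` and `≺_WR`, and every read
reads the latest preceding write on its variable (i.e. its dictating write precedes it
with no other write on the same variable in between). -/
def PramTrace.Legal (T : PramTrace ι) (σ : ι → ℕ) : Prop :=
  Function.Injective σ ∧
  (∀ a b, T.po a b → σ a < σ b) ∧
  (∀ r, T.isRead r = true → σ (T.D r) < σ r) ∧
  (∀ r w', T.isRead r = true → T.isRead w' = false → T.var w' = T.var r →
    w' ≠ T.D r → ¬ (σ (T.D r) < σ w' ∧ σ w' < σ r))

/-- The trace satisfies PRAM consistency (w.r.t. the distinguished process `p₀`):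
there is a legal schedule of its visible operations respecting program order and
write-to order. -/
def PramTrace.PRAM (T : PramTrace ι) : Prop := ∃ σ : ι → ℕ, T.Legal σ

/-- `E` contains the program-order edges and write-to edges, and is closed under
Rule C: for every triple `w = D(r)`, `r`, `w'` on the same variable with `w' ≠ w` and a
directed path from `w'` to `r`, the edge `w' → w` is in `E`. -/
def PramTrace.ClosedG (T : PramTrace ι) (E : ι → ι → Prop) : Prop :=
  (∀ a b, T.po a b → E a b) ∧
  (∀ r, T.isRead r = true → E (T.D r) r) ∧
  (∀ r w', T.isRead r = true → T.isRead w' = false → T.var w' = T.var r →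
    w' ≠ T.D r → Relation.TransGen E w' r → E w' (T.D r))

/-- The closure of the operation graph: the least relation containing the
program-order and write-to edges and closed under Rule C. -/
def PramTrace.closure (T : PramTrace ι) (a b : ι) : Prop :=
  ∀ E : ι → ι → Prop, T.ClosedG E → E a b

/-- A directed graph (relation) is acyclic if no vertex lies on a directed cycle. -/
def Acyclic {α : Type} (E : α → α → Prop) : Prop := ∀ a, ¬ Relation.TransGen E a a

/-
Add to `E` the from-read edges `r → w'`, from each read to every other write `w'` on its
variable that has no `E`-path to `r`. The enlarged graph stays acyclic: on a cycle take a
read `r₀` that is `≺_PO`-minimal among reads on cycles. The cycle cannot consist of `E`-edges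
only, so it has a last from-read edge `r → w'`, after which an `E`-path leads from `w'` to `r₀`.
All reads belong to `p₀`, so `r` and `r₀` are `≺_PO`-comparable; `r ≺_PO r₀` contradicts
minimality, and otherwise `w'` has an `E`-path to `r`, contradicting the choice of the edge.
Any injective numbering increasing along the enlarged graph is a legal schedule: a write
`w' ≠ D(r)` on the variable of `r` either reaches `r` in `E`, and then precedes `D(r)` by
Rule C, or it follows `r`.
-/

namespace Relation

theorem TransGen.sup_cases_last {α : Type} {E F : α → α → Prop} {a b : α}
    (h : TransGen (E ⊔ F) a b) :
    TransGen E a b ∨ ∃ r w, F r w ∧ ReflTransGen (E ⊔ F) a r ∧ ReflTransGen E w b := by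
  induction h with
  | single hab =>
    rcases hab with hab | hab
    · exact .inl (.single hab)
    · exact .inr ⟨a, _, hab, .refl, .refl⟩
  | @tail c d hac hcd ih =>
    rcases hcd with hcd | hcd
    · rcases ih with hEac | ⟨r, w, hrw, har, hwc⟩
      · exact .inl (hEac.tail hcd)
      · exact .inr ⟨r, w, hrw, har, hwc.tail hcd⟩
    · exact .inr ⟨c, d, hcd, hac.to_reflTransGen, .refl⟩

end Relation

theorem Acyclic.exists_injective_strictMono {α : Type} [Finite α] {R : α → α → Prop}
    (hR : Acyclic R) :
    ∃ σ : α → ℕ, Function.Injective σ ∧ ∀ a b, R a b → σ a < σ b := by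
  classical
  cases nonempty_fintype α
  set N := Fintype.card α
  let e : α → ℕ := fun a => Fintype.equivFin α a
  have he : ∀ a, e a < N := fun a => (Fintype.equivFin α a).2
  let height : α → ℕ := fun a => (Finset.univ.filter (Relation.TransGen R · a)).card
  have height_lt : ∀ a b, R a b → height a < height b := fun a b hab =>
    Finset.card_lt_card <| Finset.ssubset_iff_of_subset
      (fun c hc => by simpa using (Finset.mem_filter.1 hc).2.tail hab) |>.2
      ⟨a, by simpa using Relation.TransGen.single hab, by simpa using hR a⟩
  -- the digit `e a` below base `N` separates elements of equal height
  refine ⟨fun a => e a + N * height a, fun a b hab => ?_, fun a b hab => ?_⟩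
  · have hmod : e a = e b := by
      simpa [Nat.add_mul_mod_self_left, Nat.mod_eq_of_lt (he _)] using congrArg (· % N) hab
    exact (Fintype.equivFin α).injective (Fin.ext hmod)
  · calc e a + N * height a < N * (height a + 1) := by linarith [he a]
      _ ≤ N * height b := Nat.mul_le_mul_left N (height_lt a b hab)
      _ ≤ e b + N * height b := Nat.le_add_left _ _

namespace PramTrace

def fromRead {α : Type} (T : PramTrace α) (E : α → α → Prop) (r w : α) : Prop :=
  T.isRead r = true ∧ T.isRead w = false ∧ T.var w = T.var r ∧ w ≠ T.D r ∧
    ¬ Relation.TransGen E w r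

theorem po_wellFounded (T : PramTrace ι) : WellFounded T.po :=
  haveI : IsTrans ι T.po := ⟨fun _ _ _ h₁ h₂ => T.po_trans h₁ h₂⟩
  haveI : Std.Irrefl T.po := ⟨T.po_irrefl⟩
  Finite.wellFounded_of_trans_of_irrefl _

theorem acyclic_sup_fromRead (T : PramTrace ι) {E : ι → ι → Prop}
    (hpo : ∀ a b, T.po a b → E a b) (hE : Acyclic E) : Acyclic (E ⊔ T.fromRead E) := by
  have hle : E ≤ E ⊔ T.fromRead E := le_sup_left
  have hfr : T.fromRead E ≤ E ⊔ T.fromRead E := le_sup_right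
  have read_not_on_cycle : ∀ r₀, T.isRead r₀ = true →
      ¬ Relation.TransGen (E ⊔ T.fromRead E) r₀ r₀ := by
    intro r₀
    induction r₀ using T.po_wellFounded.induction with
    | _ r₀ ih =>
      intro hr₀ hcycle
      rcases hcycle.sup_cases_last with hE₀ | ⟨r, w, hrw, hr₀r, hwr₀⟩
      · exact hE r₀ hE₀
      have hwr₀ : Relation.TransGen E w r₀ := by
        rcases Relation.reflTransGen_iff_eq_or_transGen.1 hwr₀ with rfl | h
        · simp [hrw.2.1] at hr₀
        · exact h
      have hr_cycle : Relation.TransGen (E ⊔ T.fromRead E) r r :=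
        (Relation.TransGen.head (hfr _ _ hrw)
          (Relation.TransGen.mono hle _ _ hwr₀)).trans_left hr₀r
      rcases eq_or_ne r r₀ with rfl | hne
      · exact hrw.2.2.2.2 hwr₀
      have hproc : T.proc r = T.proc r₀ := by rw [T.reads_p0 r hrw.1, T.reads_p0 r₀ hr₀]
      rcases T.po_total r r₀ hproc hne with hpo' | hpo'
      · exact ih r hpo' hrw.1 hr_cycle
      · exact hrw.2.2.2.2 (hwr₀.tail (hpo r₀ r hpo'))
  intro a hcycle
  rcases hcycle.sup_cases_last with hE₀ | ⟨r, w, hrw, har, hwa⟩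
  · exact hE a hE₀
  exact read_not_on_cycle r hrw.1
    ((Relation.TransGen.head' (hfr _ _ hrw)
      (Relation.ReflTransGen.mono hle _ _ hwa)).trans_left har)

theorem legal_of_strictMono {α : Type} (T : PramTrace α) {E : α → α → Prop}
    (hE : T.ClosedG E) {σ : α → ℕ} (hinj : Function.Injective σ)
    (hσ : ∀ a b, (E ⊔ T.fromRead E) a b → σ a < σ b) : T.Legal σ := by
  obtain ⟨hpo, hwr, hruleC⟩ := hE
  refine ⟨hinj, fun a b h => hσ a b (.inl (hpo a b h)), fun r hr => hσ _ r (.inl (hwr r hr)),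
    fun r w' hr hw' hvar hne ⟨hDw', hw'r⟩ => ?_⟩
  by_cases hpath : Relation.TransGen E w' r
  · exact absurd hDw' (hσ w' _ (.inl (hruleC r w' hr hw' hvar hne hpath))).asymm
  · exact absurd hw'r (hσ r w' (.inr ⟨hr, hw', hvar, hne, hpath⟩)).asymm

end PramTrace

/-- If a graph `E` contains the program-order and write-to edges, is closed under
Rule C, and is acyclic, then the trace satisfies PRAM consistency for the
distinguished process. -/
theorem stmt2 (T : PramTrace ι) (E : ι → ι → Prop)
    (hclosed : T.ClosedG E) (hacyc : Acyclic E) : T.PRAM := by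
  obtain ⟨σ, hinj, hσ⟩ :=
    (T.acyclic_sup_fromRead hclosed.1 hacyc).exists_injective_strictMono
  exact ⟨σ, T.legal_of_strictMono hclosed hinj hσ⟩
end

section
/- If a trace satisfies PRAM consistency with respect to process p₀ (i.e., there exists a legal schedule of all writes and p₀'s reads respecting program order and write-to order), then the operation graph obtained by starting with program-order and write-to-order edges and iteratively adding Rule C edges until closure is acyclic. -/
variable {ι : Type} [Fintype ι]

open Function

/-- The schedule order is itself closed under Rule C: if `w'` is scheduled before `r`, legality
forbids it between `D r` and `r`, so it is scheduled before `D r`. -/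
theorem PramTrace.Legal.closedG {α : Type} {T : PramTrace α} {σ : α → ℕ} (hσ : T.Legal σ) :
    T.ClosedG ((· < ·) on σ) := by
  obtain ⟨hinj, hpo, hD, hlatest⟩ := hσ
  refine ⟨hpo, hD, fun r w' hr hw' hvar hne hpath => ?_⟩
  have hw'r : σ w' < σ r := by
    simpa only [Relation.transGen_eq_self] using Relation.TransGen.lift σ le_rfl _ _ hpath
  have hle : σ w' ≤ σ (T.D r) := not_lt.mp fun h => hlatest r w' hr hw' hvar hne ⟨h, hw'r⟩
  exact hle.lt_of_ne fun h => hne (hinj h)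

theorem Acyclic.of_le_lt_on {α : Type} {β : Type*} [Preorder β] {E : α → α → Prop} {f : α → β}
    (hE : E ≤ ((· < ·) on f)) : Acyclic E := fun a hcyc =>
  lt_irrefl (f a) <| by
    simpa only [Relation.transGen_eq_self] using Relation.TransGen.lift f hE _ _ hcyc

/-- If the trace satisfies PRAM consistency w.r.t. `p₀`, then the closure of the
operation graph under program-order edges, write-to edges, and Rule C is acyclic. -/
theorem stmt3 (T : PramTrace ι) (hpram : T.PRAM) : Acyclic T.closure := by
  obtain ⟨σ, hσ⟩ := hpram
  exact Acyclic.of_le_lt_on fun a b hab => hab _ hσ.closedG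
end

section
/- A trace (with unique write values, so each read has a unique dictating write) satisfies PRAM consistency with respect to process p₀ if and only if the closure of the operation graph under program-order edges, write-to-order edges, and Rule C edges is acyclic. -/
variable {ι : Type} [Fintype ι]

/-! A legal schedule is a strict order closed under Rule C, hence every edge of the closure
goes forward in it. Conversely, given an acyclic closure, order the operations first by the
number of `p₀`'s reads they cannot reach in the closure, and then along the closure. Every
write is thereby scheduled as late as the closure allows, so a write `w'` scheduled before a
read `r` reaches `r`; Rule C then forces `w'` before `D r`, which is legality. -/

open Function Relation Finset

lemma lt_of_transGen {α β : Type*} [Preorder β] {R : α → α → Prop} {f : α → β}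
    (hf : ∀ a b, R a b → f a < f b) {a b : α} (h : TransGen R a b) : f a < f b := by
  simpa only [transGen_eq_self] using h.lift f hf

lemma acyclic_of_lt {α : Type} {β : Type*} [Preorder β] {R : α → α → Prop} {f : α → β}
    (hf : ∀ a b, R a b → f a < f b) : Acyclic R :=
  fun _ h => (lt_of_transGen hf h).false

section Schedule

variable {α : Type} [Fintype α]

noncomputable def rankBy {β : Type*} [LinearOrder β] (f : α → β) (x : α) : ℕ :=
  #{y | f y < f x}

lemma rankBy_lt_rankBy {β : Type*} [LinearOrder β] {f : α → β} {a b : α} (h : f a < f b) :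
    rankBy f a < rankBy f b :=
  card_lt_card <| (ssubset_iff_of_subset fun y hy => by simp_all [lt_trans _ h]).2
    ⟨a, by simpa using h, by simp⟩

lemma rankBy_injective {β : Type*} [LinearOrder β] {f : α → β} (hf : Injective f) :
    Injective (rankBy f) := by
  intro a b hab
  by_contra hne
  rcases (hf.ne hne).lt_or_gt with h | h
  · exact (rankBy_lt_rankBy h).ne hab
  · exact (rankBy_lt_rankBy h).ne' hab

open scoped Classical in
noncomputable def ancestorCount (R : α → α → Prop) (x : α) : ℕ :=
  #{y | TransGen R y x}

lemma ancestorCount_lt_ancestorCount {R : α → α → Prop} (hR : Acyclic R)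
    {a b : α} (h : R a b) : ancestorCount R a < ancestorCount R b := by
  classical
  refine card_lt_card <| (ssubset_iff_of_subset fun y hy => ?_).2 ⟨a, ?_, ?_⟩
  · simp only [mem_filter, mem_univ, true_and] at hy ⊢
    exact hy.tail h
  · simpa using TransGen.single h
  · simpa using hR a

theorem exists_schedule {R : α → α → Prop} (hR : Acyclic R) (k : α → ℕ)
    (hk : ∀ a b, R a b → k a ≤ k b) :
    ∃ σ : α → ℕ, Injective σ ∧ (∀ a b, R a b → σ a < σ b) ∧ ∀ a b, σ a < σ b → k a ≤ k b := by
  let key : α → ℕ ×ₗ (ℕ ×ₗ Fin (Fintype.card α)) := fun x =>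
    toLex (k x, toLex (ancestorCount R x, Fintype.equivFin α x))
  have key_injective : Injective key := fun a b h =>
    (Fintype.equivFin α).injective (congrArg (fun p => (ofLex (ofLex p).2).2) h)
  have key_lt {a b : α} (h : R a b) : key a < key b := by
    simp only [key, Prod.Lex.toLex_lt_toLex]
    exact (hk a b h).lt_or_eq.imp_right fun he => ⟨he, .inl (ancestorCount_lt_ancestorCount hR h)⟩
  refine ⟨rankBy key, rankBy_injective key_injective, fun a b h => rankBy_lt_rankBy (key_lt h),
    fun a b hab => ?_⟩
  by_contra! hba
  have : key b < key a := by
    simp only [key, Prod.Lex.toLex_lt_toLex]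
    exact .inl hba
  exact (rankBy_lt_rankBy this).asymm hab

end Schedule

namespace PramTrace

section Closure

omit [Fintype ι]

variable (T : PramTrace ι)

lemma closure_le_of_closedG {E : ι → ι → Prop} (hE : T.ClosedG E) : T.closure ≤ E :=
  fun _ _ h => h E hE

lemma closedG_closure : T.ClosedG T.closure := by
  refine ⟨fun a b h E hE => hE.1 a b h, fun r hr E hE => hE.2.1 r hr, ?_⟩
  intro r w' hr hw' hvar hne hpath E hE
  exact hE.2.2 r w' hr hw' hvar hne (TransGen.mono (T.closure_le_of_closedG hE) _ _ hpath)

variable {T}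

lemma Legal.closedG_s4 {σ : ι → ℕ} (hσ : T.Legal σ) : T.ClosedG (fun a b => σ a < σ b) := by
  obtain ⟨hinj, hpo, hD, hlatest⟩ := hσ
  refine ⟨hpo, hD, fun r w' hr hw' hvar hne hpath => ?_⟩
  have hw'r : σ w' < σ r := lt_of_transGen (fun _ _ h => h) hpath
  exact ((hinj.ne hne).lt_or_gt).resolve_right fun h => hlatest r w' hr hw' hvar hne ⟨h, hw'r⟩

lemma PRAM.acyclic_closure (h : T.PRAM) : Acyclic T.closure := by
  obtain ⟨σ, hσ⟩ := h
  exact acyclic_of_lt fun a b hab => T.closure_le_of_closedG hσ.closedG_s4 a b hab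

end Closure

open scoped Classical in
noncomputable def unreachedReads (T : PramTrace ι) (x : ι) : ℕ :=
  #{r | T.isRead r = true ∧ ¬ ReflTransGen T.closure x r}

variable {T : PramTrace ι}

lemma unreachedReads_le_of_closure {a b : ι} (h : T.closure a b) :
    T.unreachedReads a ≤ T.unreachedReads b := by
  classical
  refine card_le_card fun r hr => ?_
  simp only [mem_filter, mem_univ, true_and] at hr ⊢
  exact ⟨hr.1, fun hbr => hr.2 (.head h hbr)⟩

/-- The reads of `p₀` are totally ordered by program order, so the reads unreachable from a
read `r` are those before it; a vertex that does not reach `r` misses these and `r` too. -/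
lemma reflTransGen_of_unreachedReads_le {x r : ι} (hr : T.isRead r = true)
    (h : T.unreachedReads x ≤ T.unreachedReads r) : ReflTransGen T.closure x r := by
  classical
  by_contra hxr
  refine h.not_gt <| card_lt_card <| (ssubset_iff_of_subset fun r' hr' => ?_).2 ⟨r, ?_, ?_⟩
  · simp only [mem_filter, mem_univ, true_and] at hr' ⊢
    refine ⟨hr'.1, fun hxr' => ?_⟩
    have hne : r ≠ r' := by rintro rfl; exact hr'.2 .refl
    rcases T.po_total r r' (by rw [T.reads_p0 r hr, T.reads_p0 r' hr'.1]) hne with hpo | hpo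
    · exact hr'.2 (.single (T.closedG_closure.1 r r' hpo))
    · exact hxr (.tail hxr' (T.closedG_closure.1 r' r hpo))
  · simpa using ⟨hr, hxr⟩
  · simp [ReflTransGen.refl]

lemma legal_of_schedule {σ : ι → ℕ} (hinj : Injective σ)
    (hmono : ∀ a b, T.closure a b → σ a < σ b)
    (hlevel : ∀ a b, σ a < σ b → T.unreachedReads a ≤ T.unreachedReads b) : T.Legal σ := by
  refine ⟨hinj, fun a b h => hmono a b (T.closedG_closure.1 a b h),
    fun r hr => hmono _ r (T.closedG_closure.2.1 r hr), ?_⟩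
  rintro r w' hr hw' hvar hne ⟨hDw', hw'r⟩
  have hpath : TransGen T.closure w' r := by
    rcases reflTransGen_iff_eq_or_transGen.1
      (reflTransGen_of_unreachedReads_le hr (hlevel w' r hw'r)) with rfl | hpath
    · simp [hr] at hw'
    · exact hpath
  exact (hmono _ _ (T.closedG_closure.2.2 r w' hr hw' hvar hne hpath)).asymm hDw'

end PramTrace

/-- A trace (with unique write values, so each read has a unique dictating write)
satisfies PRAM consistency w.r.t. `p₀` if and only if the closure of the operation
graph under program-order edges, write-to edges, and Rule C is acyclic. -/
theorem stmt4 (T : PramTrace ι) : T.PRAM ↔ Acyclic T.closure := by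
  refine ⟨PramTrace.PRAM.acyclic_closure, fun hac => ?_⟩
  obtain ⟨σ, hinj, hmono, hlevel⟩ :=
    exists_schedule hac T.unreachedReads fun _ _ => PramTrace.unreachedReads_le_of_closure
  exact ⟨σ, PramTrace.legal_of_schedule hinj hmono hlevel⟩
end

section
/- Bounded Rule-C applications per vertex: in the Read-Centric topological scheduling of the D(r)-downset, each write w' triggers at most one applicable instance of Rule C with w' as the source. Precisely: if Rule C with source w' first adds edge w' → w where w = D(r) for the earliest reachable read r on variable v, then any subsequent new read r'' ≺_PO r on v reachable from w' via w would force an edge w → D(r'') = w'' closing a cycle with the already-required edge w'' → w; hence in an acyclic graph no second Rule C instance with source w' is applicable. -/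
variable {ι : Type} [Fintype ι]

/-- Bounded Rule-C applications per source: in an acyclic Rule-C-closed operation
graph, suppose Rule C added the edge `w' → w` where `w = D(r)` for a read `r` on
variable `v = var(r)`.  Then no second distinct Rule C instance with source `w'` is
applicable: there is no read `r'' ≺_PO r` on the same variable with `D(r'') ≠ w`
reachable from `w'` via `w` — such an `r''` would force the edge `w → D(r'')`,
closing a cycle with the Rule-C-required edge `D(r'') → w`. -/
theorem stmt19 (T : PramTrace ι) (E : ι → ι → Prop)
    (hclosed : T.ClosedG E) (hacyc : Acyclic E)
    (r w' : ι) (hr : T.isRead r = true)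
    (hw' : T.isRead w' = false) (hv : T.var w' = T.var r) (hne : w' ≠ T.D r)
    (hedge : E w' (T.D r)) :
    ∀ r'', T.isRead r'' = true → T.var r'' = T.var r → T.po r'' r →
      T.D r'' ≠ T.D r → ¬ Relation.TransGen E (T.D r) r'' := by
  intro r'' hr'' hv'' hpo hDne hpath
  obtain ⟨hpo_edges, hwr_edges, hruleC⟩ := hclosed
  -- Rule C with read r'' and source D r gives edge D r → D r''
  have h1 : E (T.D r) (T.D r'') :=
    hruleC r'' (T.D r) hr'' (T.D_write r hr)
      (by rw [T.D_var r hr, hv'']) hDne.symm hpath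
  -- Path D r'' → r'' → r, then Rule C with read r and source D r'' gives D r'' → D r
  have hpath2 : Relation.TransGen E (T.D r'') r :=
    Relation.TransGen.head (hwr_edges r'' hr'') (Relation.TransGen.single (hpo_edges _ _ hpo))
  have h2 : E (T.D r'') (T.D r) :=
    hruleC r (T.D r'') hr (T.D_write r'' hr'')
      (by rw [T.D_var r'' hr'', hv'']) hDne hpath2
  exact hacyc (T.D r) (Relation.TransGen.head h1 (Relation.TransGen.single h2))
end
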